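/- Suppose the covariate is scalar and constant within each whole-plot: x_{ws} = x_w ∈ ℝ for all s = 1,…,M_w. For † ∈ {wls, ag}, consider the unadjusted factor-based regression and the additive covariate-adjusted factor-based regression that additionally includes x_{ws} (unit regression) or v̂_w((A_w,b)) = α_w·x_w (aggregate regression), assuming full-column-rank design matrices. Then, for every realization of the 2^2 split-plot assignment, the coefficients of (B_{ws}−1/2) and of (A_w−1/2)(B_{ws}−1/2) in the unit regression (respectively of (b−1/2) and (A_w−1/2)(b−1/2) in the aggregate regression) from the covariate-adjusted fit equal those from the unadjusted fit. -/

import Mathlib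

open Finset Matrix Filter
open scoped Classical BigOperators

noncomputable section

namespace SplitPlotPaper

/-- The set of treatment combinations `T = {0,1} × {0,1}`, a pair of the levels of
factor A and factor B. -/
abbrev T : Type := Bool × Bool

section LS

variable {ι κ γ : Type*} [Fintype ι] [Fintype κ] [DecidableEq κ] [Fintype γ] [DecidableEq γ]

/-- The Gram matrix `Dᵀ Π D` of a (weighted) least-squares problem with design matrix `X`
and weights `π`. -/
def gram (X : Matrix ι κ ℝ) (π : ι → ℝ) : Matrix κ κ ℝ :=
  Matrix.of fun k k' => ∑ i, π i * X i k * X i k'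

/-- The (weighted) least-squares coefficient vector `(DᵀΠD)⁻¹ DᵀΠY`. -/
def lsCoef (X : Matrix ι κ ℝ) (π y : ι → ℝ) : κ → ℝ :=
  (gram X π)⁻¹.mulVec fun k => ∑ i, π i * X i k * y i

/-- Residuals of the (weighted) least-squares fit. -/
def lsResid (X : Matrix ι κ ℝ) (π y : ι → ℝ) (i : ι) : ℝ :=
  y i - ∑ k, X i k * lsCoef X π y k

/-- The cluster-robust covariance matrix
`(DᵀΠD)⁻¹ (Σ_c D_cᵀΠ_c e_c e_cᵀ Π_c D_c) (DᵀΠD)⁻¹` for clustering map `c`. -/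
def clusterCov (X : Matrix ι κ ℝ) (π y : ι → ℝ) (c : ι → γ) : Matrix κ κ ℝ :=
  (gram X π)⁻¹ *
    (Matrix.of fun k k' =>
      ∑ g : γ, (∑ i, if c i = g then π i * X i k * lsResid X π y i else 0) *
        (∑ i, if c i = g then π i * X i k' * lsResid X π y i else 0)) *
    (gram X π)⁻¹

/-- The heteroskedasticity-robust (sandwich) covariance matrix. -/
def hcCov (X : Matrix ι κ ℝ) (π y : ι → ℝ) : Matrix κ κ ℝ :=
  (gram X π)⁻¹ *
    (Matrix.of fun k k' => ∑ i, (π i) ^ 2 * (lsResid X π y i) ^ 2 * X i k * X i k') *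
    (gram X π)⁻¹

end LS

/-- A `2²` split-plot design: `W = W0 + W1` whole-plots, whole-plot `w` containing
`M w = M0 w + M1 w` sub-plots, together with fixed potential outcomes `Y`. -/
structure Design where
  W0 : ℕ
  W1 : ℕ
  hW0 : 2 ≤ W0
  hW1 : 2 ≤ W1
  M0 : Fin (W0 + W1) → ℕ
  M1 : Fin (W0 + W1) → ℕ
  hM0 : ∀ w, 2 ≤ M0 w
  hM1 : ∀ w, 2 ≤ M1 w
  Y : (w : Fin (W0 + W1)) → Fin (M0 w + M1 w) → T → ℝ

namespace Design

variable (d : Design)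

/-- Number of whole-plots. -/
abbrev W : ℕ := d.W0 + d.W1

/-- Size of whole-plot `w`. -/
abbrev M (w : Fin d.W) : ℕ := d.M0 w + d.M1 w

/-- Total number of units. -/
def N : ℕ := ∑ w, d.M w

/-- Number of whole-plots assigned level `a` of factor A. -/
def Wa (a : Bool) : ℕ := if a then d.W1 else d.W0

/-- Number of units of whole-plot `w` assigned level `b` of factor B. -/
def Mb (w : Fin d.W) (b : Bool) : ℕ := if b then d.M1 w else d.M0 w

/-- `p_a = W_a / W`. -/
def p (a : Bool) : ℝ := (d.Wa a : ℝ) / (d.W : ℝ)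

/-- `q_{wb} = M_{wb} / M_w`. -/
def q (w : Fin d.W) (b : Bool) : ℝ := (d.Mb w b : ℝ) / (d.M w : ℝ)

/-- Inclusion probability `p_{ws}(z) = p_a q_{wb}` for `z = (a,b)`. -/
def prob (w : Fin d.W) (z : T) : ℝ := d.p z.1 * d.q w z.2

/-- Whole-plot size factor `α_w = W M_w / N`. -/
def alpha (w : Fin d.W) : ℝ := (d.W : ℝ) * (d.M w : ℝ) / (d.N : ℝ)

/-- An assignment: a level of factor A for each whole-plot and a level of factor B
for each unit. -/
abbrev Assign : Type := (Fin d.W → Bool) × ((w : Fin d.W) → Fin (d.M w) → Bool)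

/-- The set of assignments realizable under split-plot randomization: exactly `W1`
whole-plots receive level 1 of factor A, and exactly `M1 w` units of whole-plot `w`
receive level 1 of factor B.  Split-plot randomization is uniform on this set. -/
def Ω : Finset d.Assign :=
  Finset.univ.filter fun ω =>
    ((Finset.univ.filter fun w => ω.1 w = true).card = d.W1) ∧
    (∀ w, (Finset.univ.filter fun s => ω.2 w s = true).card = d.M1 w)

/-- Design-based expectation: average over the uniform distribution on `Ω`. -/
def expect (f : d.Assign → ℝ) : ℝ := (∑ ω ∈ d.Ω, f ω) / (d.Ω.card : ℝ)

/-- Design-based covariance. -/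
def cov (f g : d.Assign → ℝ) : ℝ :=
  d.expect (fun ω => f ω * g ω) - d.expect f * d.expect g

/-- Conditional expectation given an event `E` on assignments. -/
def cexpect (E : d.Assign → Prop) (f : d.Assign → ℝ) : ℝ :=
  (∑ ω ∈ d.Ω.filter E, f ω) / ((d.Ω.filter E).card : ℝ)

/-- Conditional covariance given an event `E` on assignments. -/
def ccov (E : d.Assign → Prop) (f g : d.Assign → ℝ) : ℝ :=
  d.cexpect E (fun ω => f ω * g ω) - d.cexpect E f * d.cexpect E g

/-- Treatment `Z_{ws} = (A_w, B_{ws})` received by unit `(w,s)`. -/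
def Z (ω : d.Assign) (w : Fin d.W) (s : Fin (d.M w)) : T := (ω.1 w, ω.2 w s)

/-- Observed outcome `Y_{ws} = Y_{ws}(Z_{ws})`. -/
def Yobs (ω : d.Assign) (w : Fin d.W) (s : Fin (d.M w)) : ℝ := d.Y w s (d.Z ω w s)

/-- Horvitz–Thompson estimator `Ŷ_ht(z)`. -/
def Yht (ω : d.Assign) (z : T) : ℝ :=
  (d.N : ℝ)⁻¹ * ∑ w, ∑ s, if d.Z ω w s = z then (d.prob w z)⁻¹ * d.Yobs ω w s else 0

/-- `1̂_ht(z)`: the Horvitz–Thompson estimator of the constant 1. -/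
def oneHt (ω : d.Assign) (z : T) : ℝ :=
  (d.N : ℝ)⁻¹ * ∑ w, ∑ s, if d.Z ω w s = z then (d.prob w z)⁻¹ else 0

/-- Hajek estimator `Ŷ_haj(z) = Ŷ_ht(z)/1̂_ht(z)`. -/
def Yhaj (ω : d.Assign) (z : T) : ℝ := d.Yht ω z / d.oneHt ω z

/-- Sample-mean estimator `Ŷ_sm(z)`. -/
def Ysm (ω : d.Assign) (z : T) : ℝ :=
  (∑ w, ∑ s, if d.Z ω w s = z then d.Yobs ω w s else 0) /
    (∑ w, ∑ s, if d.Z ω w s = z then (1 : ℝ) else 0)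

/-- Whole-plot sample mean `Ŷ_w(z)` (zero when whole-plot `w` has no units under `z`). -/
def Yw (ω : d.Assign) (w : Fin d.W) (z : T) : ℝ :=
  (d.Mb w z.2 : ℝ)⁻¹ * ∑ s, if d.Z ω w s = z then d.Yobs ω w s else 0

/-- Scaled whole-plot sample mean `Û_w(z) = α_w Ŷ_w(z)`. -/
def Uw (ω : d.Assign) (w : Fin d.W) (z : T) : ℝ := d.alpha w * d.Yw ω w z

/-- Finite-population average `Ȳ(z)`. -/
def Ybar (z : T) : ℝ := (d.N : ℝ)⁻¹ * ∑ w, ∑ s, d.Y w s z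

/-- Whole-plot average potential outcome `Ȳ_w(z)`. -/
def Ybarw (w : Fin d.W) (z : T) : ℝ := (d.M w : ℝ)⁻¹ * ∑ s, d.Y w s z

/-- Scaled whole-plot total `U_w(z) = α_w Ȳ_w(z)`. -/
def U (w : Fin d.W) (z : T) : ℝ := d.alpha w * d.Ybarw w z

/-- Between whole-plot covariance `S_ht(z,z')`. -/
def Sht (z z' : T) : ℝ :=
  ((d.W : ℝ) - 1)⁻¹ *
    ∑ w, (d.alpha w * d.Ybarw w z - d.Ybar z) * (d.alpha w * d.Ybarw w z' - d.Ybar z')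

/-- Between whole-plot covariance `S_haj(z,z')`. -/
def Shaj (z z' : T) : ℝ :=
  ((d.W : ℝ) - 1)⁻¹ *
    ∑ w, (d.alpha w) ^ 2 * (d.Ybarw w z - d.Ybar z) * (d.Ybarw w z' - d.Ybar z')

/-- Within whole-plot covariance `S_w(z,z')`. -/
def Sw (w : Fin d.W) (z z' : T) : ℝ :=
  ((d.M w : ℝ) - 1)⁻¹ * (d.alpha w) ^ 2 *
    ∑ s, (d.Y w s z - d.Ybarw w z) * (d.Y w s z' - d.Ybarw w z')

/-- Entry `(z,z')` of `H = diag(p₀⁻¹,p₁⁻¹) ⊗ J₂ − J₄`. -/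
def Hmat (z z' : T) : ℝ := (if z.1 = z'.1 then (d.p z.1)⁻¹ else 0) - 1

/-- Entry `(z,z')` of `H_w = diag(p₀⁻¹,p₁⁻¹) ⊗ (diag(q_{w0}⁻¹,q_{w1}⁻¹) − J₂)`,
i.e. `1(a=a')·p_a⁻¹·(q_{wb}⁻¹·1(z=z') − 1)`. -/
def Hw (w : Fin d.W) (z z' : T) : ℝ :=
  if z.1 = z'.1 then (d.p z.1)⁻¹ * ((if z = z' then (d.q w z.2)⁻¹ else 0) - 1) else 0

/-- `Ψ(z,z') = W⁻¹ Σ_w M_w⁻¹ H_w(z,z') S_w(z,z')`. -/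
def Psi (z z' : T) : ℝ := (d.W : ℝ)⁻¹ * ∑ w, (d.M w : ℝ)⁻¹ * d.Hw w z z' * d.Sw w z z'

/-- Sample analog `Ŝ_ht(z,z')` (for `z,z'` sharing the same A-level `z.1`). -/
def ShtHat (ω : d.Assign) (z z' : T) : ℝ :=
  ((d.Wa z.1 : ℝ) - 1)⁻¹ *
    ∑ w, if ω.1 w = z.1 then
        (d.alpha w * d.Yw ω w z - d.Yht ω z) * (d.alpha w * d.Yw ω w z' - d.Yht ω z')
      else 0

/-- Sample analog `Ŝ_haj(z,z')` (for `z,z'` sharing the same A-level `z.1`). -/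
def ShajHat (ω : d.Assign) (z z' : T) : ℝ :=
  ((d.Wa z.1 : ℝ) - 1)⁻¹ *
    ∑ w, if ω.1 w = z.1 then
        (d.alpha w) ^ 2 * (d.Yw ω w z - d.Yhaj ω z) * (d.Yw ω w z' - d.Yhaj ω z')
      else 0

/-- Covariance estimator `V̂_ht` (block-diagonal in the A-levels). -/
def Vht (ω : d.Assign) : Matrix T T ℝ :=
  Matrix.of fun z z' => if z.1 = z'.1 then (d.Wa z.1 : ℝ)⁻¹ * d.ShtHat ω z z' else 0

/-- Covariance estimator `V̂_haj` (block-diagonal in the A-levels). -/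
def Vhaj (ω : d.Assign) : Matrix T T ℝ :=
  Matrix.of fun z z' => if z.1 = z'.1 then (d.Wa z.1 : ℝ)⁻¹ * d.ShajHat ω z z' else 0

/-- Index set of units. -/
abbrev Idx : Type := (w : Fin d.W) × Fin (d.M w)

/-- Design matrix of the unit regression on the four treatment indicators. -/
def Dunit (ω : d.Assign) : Matrix d.Idx T ℝ :=
  Matrix.of fun i z => if d.Z ω i.1 i.2 = z then 1 else 0

/-- Observed outcome vector, indexed by units. -/
def Yv (ω : d.Assign) : d.Idx → ℝ := fun i => d.Yobs ω i.1 i.2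

/-- Inverse-probability weights `p_{ws}(Z_{ws})⁻¹`. -/
def wgt (ω : d.Assign) : d.Idx → ℝ := fun i => (d.prob i.1 (d.Z ω i.1 i.2))⁻¹

/-- Index set of the aggregate regression: pairs `(w,b)`. -/
abbrev AgIdx : Type := Fin d.W × Bool

/-- Design matrix of the aggregate regression on the four treatment indicators. -/
def Dag (ω : d.Assign) : Matrix d.AgIdx T ℝ :=
  Matrix.of fun i z => if (ω.1 i.1, i.2) = z then 1 else 0

/-- Outcome vector of the aggregate regression: `Û_w((A_w, b))`. -/
def Uag (ω : d.Assign) : d.AgIdx → ℝ := fun i => d.Uw ω i.1 (ω.1 i.1, i.2)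

/-- Clustering of units by whole-plot. -/
def clUnit : d.Idx → Fin d.W := fun i => i.1

/-- Clustering of aggregate observations by whole-plot. -/
def clAg : d.AgIdx → Fin d.W := fun i => i.1

/-- OLS coefficients `β_ols` of the unit regression. -/
def betaOls (ω : d.Assign) : T → ℝ := lsCoef (d.Dunit ω) (fun _ => 1) (d.Yv ω)

/-- WLS coefficients `β_wls` of the unit regression with inverse probability weights. -/
def betaWls (ω : d.Assign) : T → ℝ := lsCoef (d.Dunit ω) (d.wgt ω) (d.Yv ω)

/-- OLS coefficients `β_ag` of the aggregate regression. -/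
def betaAg (ω : d.Assign) : T → ℝ := lsCoef (d.Dag ω) (fun _ => 1) (d.Uag ω)

/-- Cluster-robust covariance `Ṽ_ols` of the unweighted unit regression. -/
def Vols (ω : d.Assign) : Matrix T T ℝ :=
  clusterCov (d.Dunit ω) (fun _ => 1) (d.Yv ω) d.clUnit

/-- Cluster-robust covariance `Ṽ_wls` of the weighted unit regression. -/
def Vwls (ω : d.Assign) : Matrix T T ℝ :=
  clusterCov (d.Dunit ω) (d.wgt ω) (d.Yv ω) d.clUnit

/-- Cluster-robust covariance `Ṽ_ag` of the aggregate regression. -/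
def VagCR (ω : d.Assign) : Matrix T T ℝ :=
  clusterCov (d.Dag ω) (fun _ => 1) (d.Uag ω) d.clAg

section Covariates

variable {J : ℕ}

/-- Horvitz–Thompson estimator of the covariate means. -/
def xht (x : (w : Fin d.W) → Fin (d.M w) → Fin J → ℝ) (ω : d.Assign) (z : T) (j : Fin J) : ℝ :=
  (d.N : ℝ)⁻¹ * ∑ w, ∑ s, if d.Z ω w s = z then (d.prob w z)⁻¹ * x w s j else 0

/-- Hajek estimator of the covariate means. -/
def xhaj (x : (w : Fin d.W) → Fin (d.M w) → Fin J → ℝ) (ω : d.Assign) (z : T) (j : Fin J) : ℝ :=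
  d.xht x ω z j / d.oneHt ω z

/-- Sample-mean estimator of the covariate means. -/
def xsm (x : (w : Fin d.W) → Fin (d.M w) → Fin J → ℝ) (ω : d.Assign) (z : T) (j : Fin J) : ℝ :=
  (∑ w, ∑ s, if d.Z ω w s = z then x w s j else 0) /
    (∑ w, ∑ s, if d.Z ω w s = z then (1 : ℝ) else 0)

/-- Whole-plot sample mean of the covariates `x̂_w(z)`. -/
def xw (x : (w : Fin d.W) → Fin (d.M w) → Fin J → ℝ) (ω : d.Assign) (w : Fin d.W) (z : T)
    (j : Fin J) : ℝ :=
  (d.Mb w z.2 : ℝ)⁻¹ * ∑ s, if d.Z ω w s = z then x w s j else 0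

/-- Scaled whole-plot covariate total `v̂_w(z) = α_w x̂_w(z)`. -/
def vw (x : (w : Fin d.W) → Fin (d.M w) → Fin J → ℝ) (ω : d.Assign) (w : Fin d.W) (z : T)
    (j : Fin J) : ℝ :=
  d.alpha w * d.xw x ω w z j

/-- Design matrix of the additive covariate-adjusted unit regression. -/
def DunitF (x : (w : Fin d.W) → Fin (d.M w) → Fin J → ℝ) (ω : d.Assign) :
    Matrix d.Idx (T ⊕ Fin J) ℝ :=
  Matrix.of fun i k =>
    Sum.elim (fun z => if d.Z ω i.1 i.2 = z then (1 : ℝ) else 0) (fun j => x i.1 i.2 j) k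

/-- Design matrix of the additive covariate-adjusted aggregate regression. -/
def DagF (x : (w : Fin d.W) → Fin (d.M w) → Fin J → ℝ) (ω : d.Assign) :
    Matrix d.AgIdx (T ⊕ Fin J) ℝ :=
  Matrix.of fun i k =>
    Sum.elim (fun z => if (ω.1 i.1, i.2) = z then (1 : ℝ) else 0)
      (fun j => d.vw x ω i.1 (ω.1 i.1, i.2) j) k

/-- Design matrix of the fully-interacted covariate-adjusted unit regression. -/
def DunitL (x : (w : Fin d.W) → Fin (d.M w) → Fin J → ℝ) (ω : d.Assign) :
    Matrix d.Idx (T ⊕ T × Fin J) ℝ :=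
  Matrix.of fun i k =>
    Sum.elim (fun z => if d.Z ω i.1 i.2 = z then (1 : ℝ) else 0)
      (fun zj => if d.Z ω i.1 i.2 = zj.1 then x i.1 i.2 zj.2 else 0) k

/-- Design matrix of the fully-interacted covariate-adjusted aggregate regression. -/
def DagL (x : (w : Fin d.W) → Fin (d.M w) → Fin J → ℝ) (ω : d.Assign) :
    Matrix d.AgIdx (T ⊕ T × Fin J) ℝ :=
  Matrix.of fun i k =>
    Sum.elim (fun z => if (ω.1 i.1, i.2) = z then (1 : ℝ) else 0)
      (fun zj => if (ω.1 i.1, i.2) = zj.1 then d.vw x ω i.1 (ω.1 i.1, i.2) zj.2 else 0) k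

end Covariates

/-- Centered factor-A indicator `A_w − 1/2`. -/
def Ac (ω : d.Assign) (w : Fin d.W) : ℝ := (if ω.1 w then 1 else 0) - 1 / 2

/-- Centered factor-B indicator `B_{ws} − 1/2`. -/
def Bcu (ω : d.Assign) (i : d.Idx) : ℝ := (if ω.2 i.1 i.2 then 1 else 0) - 1 / 2

/-- Design matrix of the factor-based unit regression
`Y ~ 1 + (A−1/2) + (B−1/2) + (A−1/2)(B−1/2)`. -/
def Funit (ω : d.Assign) : Matrix d.Idx (Fin 4) ℝ :=
  Matrix.of fun i => ![1, d.Ac ω i.1, d.Bcu ω i, d.Ac ω i.1 * d.Bcu ω i]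

/-- Design matrix of the factor-based aggregate regression
`Û ~ 1 + (A−1/2) + (b−1/2) + (A−1/2)(b−1/2)`. -/
def Fag (ω : d.Assign) : Matrix d.AgIdx (Fin 4) ℝ :=
  Matrix.of fun i =>
    ![1, d.Ac ω i.1, (if i.2 then 1 else 0) - 1 / 2,
      d.Ac ω i.1 * ((if i.2 then 1 else 0) - 1 / 2)]

end Design

/-- The contrast matrix `G₀` with rows `g_A`, `g_B`, `g_AB`. -/
def G0 : Matrix (Fin 3) T ℝ :=
  Matrix.of fun k z =>
    ![(if z.1 then (1 : ℝ) else -1) / 2,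
      (if z.2 then (1 : ℝ) else -1) / 2,
      (if z.1 then (-1 : ℝ) else 1) * (if z.2 then (-1 : ℝ) else 1)] k


namespace Design

variable (d : Design)

/-- Design matrix of the additive covariate-adjusted factor-based unit regression
`Y ~ 1 + (A−1/2) + (B−1/2) + (A−1/2)(B−1/2) + x`, with a scalar covariate that is
constant within each whole-plot. -/
def Funit5 (x : Fin d.W → ℝ) (ω : d.Assign) : Matrix d.Idx (Fin 5) ℝ :=
  Matrix.of fun i =>
    ![1, d.Ac ω i.1, d.Bcu ω i, d.Ac ω i.1 * d.Bcu ω i, x i.1]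

/-- Design matrix of the additive covariate-adjusted factor-based aggregate regression
`Û ~ 1 + (A−1/2) + (b−1/2) + (A−1/2)(b−1/2) + v̂`, where `v̂_w((A_w,b)) = α_w x_w` for a
scalar covariate constant within each whole-plot. -/
def Fag5 (x : Fin d.W → ℝ) (ω : d.Assign) : Matrix d.AgIdx (Fin 5) ℝ :=
  Matrix.of fun i =>
    ![1, d.Ac ω i.1, (if i.2 then 1 else 0) - 1 / 2,
      d.Ac ω i.1 * ((if i.2 then 1 else 0) - 1 / 2), d.alpha i.1 * x i.1]

end Design

/-!
Under split-plot randomization every whole-plot `w` has exactly `M_{w1}` units at level 1 of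
factor B, so the inverse-probability weighted B contrast sums to zero within each whole-plot;
in the aggregate regression the two rows `b = 0, 1` of a whole-plot cancel in the same way.
Hence the B and AB columns are orthogonal, in the weighted Gram matrix, to every regressor that is
constant within whole-plots: the intercept, the A column and the covariate. For an orthogonal
block of regressors the normal equations decouple, so its coefficients are those of the regression
on the block alone, with or without the covariate.
-/

section LeastSquares

variable {ι κ σ γ : Type*} [Fintype ι]

theorem gram_eq_transpose_mul_diagonal_mul (X : Matrix ι κ ℝ) (π : ι → ℝ) :
    gram X π = Xᵀ * diagonal π * X := by
  ext k k'
  simp only [gram, of_apply, mul_apply, diagonal_apply, transpose_apply, mul_ite, mul_zero,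
    Finset.sum_ite_eq', Finset.mem_univ, if_true]
  exact Finset.sum_congr rfl fun i _ => by ring

theorem posSemidef_gram [Fintype κ] {π : ι → ℝ} (hπ : 0 ≤ π) (X : Matrix ι κ ℝ) :
    (gram X π).PosSemidef := by
  rw [gram_eq_transpose_mul_diagonal_mul, ← conjTranspose_eq_transpose_of_trivial]
  exact (PosSemidef.diagonal hπ).conjTranspose_mul_mul_same X

theorem isUnit_det_gram_submatrix [Fintype κ] [DecidableEq κ] [Fintype σ] [DecidableEq σ]
    {X : Matrix ι κ ℝ} {π : ι → ℝ} (hπ : 0 ≤ π) (hX : IsUnit (gram X π).det)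
    {f : σ → κ} (hf : Function.Injective f) :
    IsUnit (gram (X.submatrix id f) π).det := by
  have hpos : (gram X π).PosDef :=
    (posSemidef_gram hπ X).posDef_iff_isUnit.2 ((isUnit_iff_isUnit_det _).2 hX)
  exact (isUnit_iff_isUnit_det _).1 (hpos.submatrix hf).isUnit

theorem gram_mulVec_lsCoef [Fintype κ] [DecidableEq κ] {X : Matrix ι κ ℝ} {π : ι → ℝ}
    (hX : IsUnit (gram X π).det) (y : ι → ℝ) :
    gram X π *ᵥ lsCoef X π y = fun k => ∑ i, π i * X i k * y i := by
  rw [lsCoef, mulVec_mulVec, mul_nonsing_inv _ hX, one_mulVec]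

theorem lsCoef_eq_of_gram_mulVec [Fintype κ] [DecidableEq κ] {X : Matrix ι κ ℝ} {π y : ι → ℝ}
    (hX : IsUnit (gram X π).det) {β : κ → ℝ}
    (hβ : gram X π *ᵥ β = fun k => ∑ i, π i * X i k * y i) : lsCoef X π y = β := by
  rw [lsCoef, ← hβ, mulVec_mulVec, nonsing_inv_mul _ hX, one_mulVec]

theorem lsCoef_comp_eq_of_gram_eq_zero [Fintype κ] [DecidableEq κ] [Fintype σ]
    [DecidableEq σ] {X : Matrix ι κ ℝ} {π : ι → ℝ} (hπ : 0 ≤ π)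
    (hX : IsUnit (gram X π).det) {f : σ → κ} (hf : Function.Injective f)
    (horth : ∀ j k, k ∉ Set.range f → gram X π (f j) k = 0) (y : ι → ℝ) :
    lsCoef X π y ∘ f = lsCoef (X.submatrix id f) π y := by
  refine (lsCoef_eq_of_gram_mulVec (isUnit_det_gram_submatrix hπ hX hf) ?_).symm
  funext j
  refine Eq.trans ?_ (congrFun (gram_mulVec_lsCoef hX y) (f j))
  exact Fintype.sum_of_injective f hf _ _ (fun k hk => by simp [horth j k hk]) fun _ => rfl

theorem gram_eq_zero_of_balanced {X : Matrix ι κ ℝ} {π β : ι → ℝ} (c : ι → γ)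
    (hβ : ∀ φ : γ → ℝ, ∑ i, π i * φ (c i) * β i = 0) {k k' : κ} (a b : γ → ℝ)
    (hk : ∀ i, X i k = a (c i) * β i) (hk' : ∀ i, X i k' = b (c i)) :
    gram X π k k' = 0 := by
  rw [← hβ (a * b)]
  refine Finset.sum_congr rfl fun i _ => ?_
  simp only [hk, hk', Pi.mul_apply]
  ring

end LeastSquares

section FactorDesign

variable {ι γ : Type*}

/- Observations `i` lie in whole-plots `c i`; `a` is a whole-plot-level contrast (factor A),
`β` a contrast varying within whole-plots (factor B) and `v` a whole-plot-level covariate. -/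
def factorDesign (c : ι → γ) (a : γ → ℝ) (β : ι → ℝ) : Matrix ι (Fin 4) ℝ :=
  Matrix.of fun i => ![1, a (c i), β i, a (c i) * β i]

def factorDesignAdj (c : ι → γ) (a : γ → ℝ) (β : ι → ℝ) (v : γ → ℝ) :
    Matrix ι (Fin 5) ℝ :=
  Matrix.of fun i => ![1, a (c i), β i, a (c i) * β i, v (c i)]

variable {c : ι → γ} {a : γ → ℝ} {β : ι → ℝ} {π : ι → ℝ}

theorem factorDesign_eq_submatrix (v : γ → ℝ) :
    factorDesign c a β = (factorDesignAdj c a β v).submatrix id Fin.castSucc := by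
  ext i k
  fin_cases k <;> rfl

theorem lsCoef_factorDesignAdj_eq [Fintype ι] (hπ : 0 ≤ π)
    (hβ : ∀ φ : γ → ℝ, ∑ i, π i * φ (c i) * β i = 0) {v : γ → ℝ}
    (hX : IsUnit (gram (factorDesignAdj c a β v) π).det) (y : ι → ℝ) (j : Fin 2) :
    lsCoef (factorDesignAdj c a β v) π y (![2, 3] j) =
      lsCoef (factorDesign c a β) π y (![2, 3] j) := by
  have hinj : Function.Injective (![2, 3] : Fin 2 → Fin 5) := by decide
  have hX4 : IsUnit (gram (factorDesign c a β) π).det := by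
    rw [factorDesign_eq_submatrix v]
    exact isUnit_det_gram_submatrix hπ hX (Fin.castSucc_injective 4)
  have hblock : (factorDesignAdj c a β v).submatrix id ![2, 3] =
      (factorDesign c a β).submatrix id ![2, 3] := by
    ext i j
    fin_cases j <;> rfl
  have horth5 : ∀ j k, k ∉ Set.range ![2, 3] →
      gram (factorDesignAdj c a β v) π (![2, 3] j) k = 0 := by
    intro j k hk
    refine gram_eq_zero_of_balanced c hβ (fun g => ![1, a g] j)
      (fun g => ![1, a g, 0, 0, v g] k) (fun i => ?_) (fun i => ?_)
    · fin_cases j <;> simp [factorDesignAdj]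
    · fin_cases k <;> simp_all [factorDesignAdj]
  have horth4 : ∀ j k, k ∉ Set.range ![2, 3] →
      gram (factorDesign c a β) π (![2, 3] j) k = 0 := by
    intro j k hk
    refine gram_eq_zero_of_balanced c hβ (fun g => ![1, a g] j)
      (fun g => ![1, a g, 0, 0] k) (fun i => ?_) (fun i => ?_)
    · fin_cases j <;> simp [factorDesign]
    · fin_cases k <;> simp_all [factorDesign]
  rw [← Function.comp_apply (f := lsCoef _ π y),
    lsCoef_comp_eq_of_gram_eq_zero hπ hX hinj horth5, hblock,
    ← lsCoef_comp_eq_of_gram_eq_zero hπ hX4 (by decide) horth4, Function.comp_apply]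

end FactorDesign

theorem sum_mul_centered_bool_eq_zero {γ : Type*} [Fintype γ] (φ : γ → ℝ) :
    ∑ i : γ × Bool, φ i.1 * ((if i.2 then 1 else 0) - 1 / 2) = 0 := by
  simp only [Fintype.sum_prod_type, Fintype.sum_bool, if_true, Bool.false_eq_true, if_false]
  exact Finset.sum_eq_zero fun _ _ => by ring

theorem sum_comp_bool {ι M : Type*} [Fintype ι] [AddCommMonoid M] (b : ι → Bool)
    (g : Bool → M) :
    ∑ i, g (b i) = #{i | b i} • g true + #{i | ¬ b i} • g false := by
  rw [← Finset.sum_filter_add_sum_filter_not _ fun i => b i]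
  congr 1 <;> rw [← Finset.sum_const] <;> refine Finset.sum_congr rfl fun i hi => ?_ <;>
    simp_all

namespace Design

variable (d : Design)

theorem p_pos (a : Bool) : 0 < d.p a := by
  have := d.hW0
  have := d.hW1
  cases a <;> simp only [p, Wa] <;> positivity

theorem q_pos (w : Fin d.W) (b : Bool) : 0 < d.q w b := by
  have := d.hM0 w
  have := d.hM1 w
  cases b <;> simp only [q, Mb] <;> positivity

theorem wgt_pos (ω : d.Assign) (i : d.Idx) : 0 < d.wgt ω i :=
  inv_pos.2 (mul_pos (d.p_pos _) (d.q_pos _ _))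

theorem sum_inv_q_mul_centered_eq_zero {ω : d.Assign} (hω : ω ∈ d.Ω) (w : Fin d.W) :
    ∑ s, (d.q w (ω.2 w s))⁻¹ * ((if ω.2 w s then 1 else 0) - 1 / 2) = 0 := by
  have h1 : #{s | ω.2 w s} = d.M1 w := (Finset.mem_filter.1 hω).2.2 w
  have h0 : #{s | ¬ ω.2 w s} = d.M0 w := by
    have := Finset.card_filter_add_card_filter_not (s := univ) fun s => ω.2 w s = true
    simp only [card_univ, Fintype.card_fin, h1] at this
    have hM : d.M w = d.M0 w + d.M1 w := rfl
    omega
  rw [sum_comp_bool (ω.2 w) fun b => (d.q w b)⁻¹ * ((if b then 1 else 0) - 1 / 2), h1, h0]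
  have := d.hM0 w
  have := d.hM1 w
  simp only [q, Mb, nsmul_eq_mul, if_true, Bool.false_eq_true, if_false]
  field_simp
  ring

theorem sum_wgt_mul_Bcu_eq_zero {ω : d.Assign} (hω : ω ∈ d.Ω) (φ : Fin d.W → ℝ) :
    ∑ i, d.wgt ω i * φ i.1 * d.Bcu ω i = 0 := by
  rw [Fintype.sum_sigma]
  refine Finset.sum_eq_zero fun w _ => ?_
  calc ∑ s, d.wgt ω ⟨w, s⟩ * φ w * d.Bcu ω ⟨w, s⟩
      = (d.p (ω.1 w))⁻¹ * φ w *
          ∑ s, (d.q w (ω.2 w s))⁻¹ * ((if ω.2 w s then 1 else 0) - 1 / 2) := by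
        rw [Finset.mul_sum]
        exact Finset.sum_congr rfl fun s _ => by simp only [wgt, prob, Z, Bcu, mul_inv]; ring
    _ = 0 := by rw [d.sum_inv_q_mul_centered_eq_zero hω w, mul_zero]

end Design

/-- With a scalar covariate constant within each whole-plot, for the
'wls' unit factor regression and the 'ag' aggregate factor regression, the coefficients
of `(B−1/2)` and of `(A−1/2)(B−1/2)` from the additive covariate-adjusted fit equal
those from the unadjusted fit, for every realization of the assignment (full column
rank of the adjusted design matrices is expressed via invertibility of the Gram
matrices). -/
theorem additive_adjustment_invariance (d : Design) (x : Fin d.W → ℝ)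
    (ω : d.Assign) (hω : ω ∈ d.Ω)
    (hrkU : IsUnit (gram (d.Funit5 x ω) (d.wgt ω)).det)
    (hrkA : IsUnit (gram (d.Fag5 x ω) (fun _ => 1)).det) :
    (lsCoef (d.Funit5 x ω) (d.wgt ω) (d.Yv ω) 2
        = lsCoef (d.Funit ω) (d.wgt ω) (d.Yv ω) 2 ∧
      lsCoef (d.Funit5 x ω) (d.wgt ω) (d.Yv ω) 3
        = lsCoef (d.Funit ω) (d.wgt ω) (d.Yv ω) 3) ∧
    (lsCoef (d.Fag5 x ω) (fun _ => 1) (d.Uag ω) 2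
        = lsCoef (d.Fag ω) (fun _ => 1) (d.Uag ω) 2 ∧
      lsCoef (d.Fag5 x ω) (fun _ => 1) (d.Uag ω) 3
        = lsCoef (d.Fag ω) (fun _ => 1) (d.Uag ω) 3) := by
  have hU := lsCoef_factorDesignAdj_eq (c := (Sigma.fst : d.Idx → Fin d.W))
    (fun i => (d.wgt_pos ω i).le) (d.sum_wgt_mul_Bcu_eq_zero hω) hrkU (d.Yv ω)
  have hA := lsCoef_factorDesignAdj_eq (c := (Prod.fst : d.AgIdx → Fin d.W))
    (β := fun i => (if i.2 then 1 else 0) - 1 / 2) (v := fun w => d.alpha w * x w)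
    (fun _ => zero_le_one) (fun φ => by simpa using sum_mul_centered_bool_eq_zero φ) hrkA
    (d.Uag ω)
  exact ⟨⟨hU 0, hU 1⟩, hA 0, hA 1⟩

end SplitPlotPaper
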